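/- Let Q be a dynamically generated basic sequence. For every ℓ ∈ ℕ, the sum over all digit blocks D ∈ ℕ₀^ℓ of P_D equals 1, where P_D = lim_{n→∞} Q_n(D)/n. -/

import Mathlib

/-!
At each position `j` the weights `𝓘_{Q,j}(D) / (q_j ⋯ q_{j+ℓ-1})` form the uniform probability
distribution on the box `∏ i < ℓ, [0, q_{j+i})`, so every finite partial sum of the `P_D` is at
most `1`. Conversely, the box `[0, M)^ℓ` carries weight at least
`1 - #{i < ℓ | q_{j+i} > M}` at position `j`; averaging over `j` and applying genericity of `x₀`
to the continuous function `1_{f > M}`, the `P_D` on that box add up to at least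
`1 - ℓ μ{f > M}`, which tends to `1` as `M → ∞`.
-/

open Filter MeasureTheory Topology Finset

theorem one_sub_sum_le_prod {ι : Type*} (s : Finset ι) {a : ι → ℝ}
    (h0 : ∀ i ∈ s, 0 ≤ a i) (h1 : ∀ i ∈ s, a i ≤ 1) :
    1 - ∑ i ∈ s, (1 - a i) ≤ ∏ i ∈ s, a i := by
  classical
  induction s using Finset.induction_on with
  | empty => simp
  | @insert x s hx ih =>
    simp only [forall_mem_insert] at h0 h1
    have hs := ih h0.2 h1.2
    have hp : ∏ i ∈ s, a i ≤ 1 := prod_le_one h0.2 h1.2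
    rw [sum_insert hx, prod_insert hx]
    nlinarith [h0.1, h1.1]

noncomputable def digitWeight (b d : ℕ) : ℝ := if d < b then (b : ℝ)⁻¹ else 0

theorem digitWeight_nonneg (b d : ℕ) : 0 ≤ digitWeight b d := by
  unfold digitWeight
  split_ifs <;> positivity

theorem sum_range_digitWeight (b M : ℕ) :
    ∑ d ∈ range M, digitWeight b d = (min M b : ℕ) / (b : ℝ) := by
  have hfilter : {d ∈ range M | d < b} = range (min M b) := by ext; simp
  simp only [digitWeight, sum_ite, sum_const_zero, add_zero, sum_const, hfilter, card_range,
    nsmul_eq_mul, div_eq_mul_inv]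

section

variable {ι : Type*} [Fintype ι]

theorem sum_piFinset_range_prod_digitWeight [DecidableEq ι] (b : ι → ℕ) (M : ℕ) :
    ∑ D ∈ Fintype.piFinset fun _ ↦ range M, ∏ i, digitWeight (b i) (D i) =
      ∏ i, (min M (b i) : ℕ) / (b i : ℝ) := by
  simp only [sum_prod_piFinset, sum_range_digitWeight]

theorem sum_prod_digitWeight_le_one (b : ι → ℕ) (F : Finset (ι → ℕ)) :
    ∑ D ∈ F, ∏ i, digitWeight (b i) (D i) ≤ 1 := by
  classical
  set M := F.sup (fun D ↦ univ.sup D) + 1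
  have hF : F ⊆ Fintype.piFinset fun _ ↦ range M := fun D hD ↦
    Fintype.mem_piFinset.2 fun i ↦ mem_range.2 <| Nat.lt_succ_of_le <|
      (le_sup (f := D) (mem_univ i)).trans (le_sup (f := fun D ↦ univ.sup D) hD)
  calc ∑ D ∈ F, ∏ i, digitWeight (b i) (D i)
      ≤ ∑ D ∈ Fintype.piFinset fun _ ↦ range M, ∏ i, digitWeight (b i) (D i) :=
        sum_le_sum_of_subset_of_nonneg hF fun _ _ _ ↦
          prod_nonneg fun _ _ ↦ digitWeight_nonneg _ _
    _ = ∏ i, (min M (b i) : ℕ) / (b i : ℝ) := sum_piFinset_range_prod_digitWeight b M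
    _ ≤ 1 := prod_le_one (fun i _ ↦ by positivity)
        fun i _ ↦ div_le_one_of_le₀ (by exact_mod_cast min_le_right _ _) (Nat.cast_nonneg _)

theorem one_sub_sum_ite_lt_le_prod_min_div {b : ι → ℕ} (hb : ∀ i, 0 < b i) (M : ℕ) :
    1 - ∑ i, (if M < b i then 1 else 0 : ℝ) ≤ ∏ i, (min M (b i) : ℕ) / (b i : ℝ) := by
  refine le_trans (sub_le_sub_left (sum_le_sum fun i _ ↦ ?_) 1)
    (one_sub_sum_le_prod univ (fun i _ ↦ by positivity) fun i _ ↦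
      div_le_one_of_le₀ (by exact_mod_cast min_le_right _ _) (Nat.cast_nonneg _))
  split_ifs with hM
  · simp only [sub_le_self_iff]; positivity
  · rw [min_eq_right (not_lt.1 hM), div_self (by exact_mod_cast (hb i).ne'), sub_self]

end

/-- `blockWeight q j D = 𝓘_{Q,j}(D) / (q_j ⋯ q_{j+ℓ-1})`, as a product of one factor per digit. -/
noncomputable def blockWeight (q : ℕ → ℕ) {ℓ : ℕ} (j : ℕ) (D : Fin ℓ → ℕ) : ℝ :=
  ∏ i : Fin ℓ, digitWeight (q (j + i)) (D i)

theorem blockWeight_eq_ite (q : ℕ → ℕ) {ℓ : ℕ} (j : ℕ) (D : Fin ℓ → ℕ) :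
    blockWeight q j D =
      if ∀ i : Fin ℓ, D i < q (j + i) then (∏ i : Fin ℓ, (q (j + i) : ℝ))⁻¹ else 0 := by
  split_ifs with h
  · simp only [blockWeight, digitWeight, h, if_true, prod_inv_distrib]
  · obtain ⟨i, hi⟩ := not_forall.1 h
    exact prod_eq_zero (mem_univ i) (if_neg hi)

theorem blockWeight_nonneg (q : ℕ → ℕ) {ℓ : ℕ} (j : ℕ) (D : Fin ℓ → ℕ) : 0 ≤ blockWeight q j D :=
  prod_nonneg fun _ _ ↦ digitWeight_nonneg _ _

theorem sum_blockWeight_le_one (q : ℕ → ℕ) {ℓ : ℕ} (j : ℕ) (F : Finset (Fin ℓ → ℕ)) :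
    ∑ D ∈ F, blockWeight q j D ≤ 1 :=
  sum_prod_digitWeight_le_one _ F

theorem one_le_sum_blockWeight_add_sum_ite_lt {q : ℕ → ℕ} (hq : ∀ n, 0 < q n) (ℓ M j : ℕ) :
    1 ≤ ∑ D ∈ Fintype.piFinset (fun _ : Fin ℓ ↦ range M), blockWeight q j D +
      ∑ i : Fin ℓ, (if M < q (j + i) then 1 else 0 : ℝ) := by
  have := one_sub_sum_ite_lt_le_prod_min_div (b := fun i : Fin ℓ ↦ q (j + i)) (fun _ ↦ hq _) M
  rw [← sum_piFinset_range_prod_digitWeight] at this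
  simp only [blockWeight]
  linarith

noncomputable def cesaroAvg (u : ℕ → ℝ) (n : ℕ) : ℝ := (∑ j ∈ Icc 1 n, u j) / n

theorem cesaroAvg_le_cesaroAvg {u v : ℕ → ℝ} (h : ∀ j, u j ≤ v j) (n : ℕ) :
    cesaroAvg u n ≤ cesaroAvg v n :=
  div_le_div_of_nonneg_right (sum_le_sum fun j _ ↦ h j) n.cast_nonneg

theorem cesaroAvg_nonneg {u : ℕ → ℝ} (h : ∀ j, 0 ≤ u j) (n : ℕ) : 0 ≤ cesaroAvg u n :=
  div_nonneg (sum_nonneg fun j _ ↦ h j) n.cast_nonneg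

theorem cesaroAvg_const (c : ℝ) {n : ℕ} (hn : n ≠ 0) : cesaroAvg (fun _ ↦ c) n = c := by
  simp [cesaroAvg, hn]

theorem cesaroAvg_add (u v : ℕ → ℝ) (n : ℕ) :
    cesaroAvg (fun j ↦ u j + v j) n = cesaroAvg u n + cesaroAvg v n := by
  simp only [cesaroAvg, sum_add_distrib, add_div]

theorem cesaroAvg_sum {α : Type*} (s : Finset α) (u : α → ℕ → ℝ) (n : ℕ) :
    cesaroAvg (fun j ↦ ∑ a ∈ s, u a j) n = ∑ a ∈ s, cesaroAvg (u a) n := by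
  simp only [cesaroAvg, sum_comm (s := Icc 1 n), sum_div]

theorem sum_Icc_comp_add (u : ℕ → ℝ) (m n : ℕ) :
    ∑ j ∈ Icc 1 n, u (j + m) = ∑ k ∈ range (n + m + 1), u k - ∑ k ∈ range (m + 1), u k := by
  induction n with
  | zero => simp
  | succ n ih =>
    rw [sum_Icc_succ_top (by omega), ih, show n + 1 + m + 1 = n + m + 1 + 1 by omega,
      sum_range_succ _ (n + m + 1), Nat.add_right_comm n 1 m]
    ring

theorem tendsto_cesaroAvg_comp_add {u : ℕ → ℝ} {I : ℝ}
    (hu : Tendsto (fun N : ℕ ↦ (1 / (N : ℝ)) * ∑ k ∈ range N, u k) atTop (𝓝 I)) (m : ℕ) :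
    Tendsto (cesaroAvg fun j ↦ u (j + m)) atTop (𝓝 I) := by
  have hratio : Tendsto (fun n : ℕ ↦ 1 + (m + 1 : ℝ) / n) atTop (𝓝 1) := by
    simpa using tendsto_const_nhds.add (tendsto_const_div_atTop_nhds_zero_nat (m + 1 : ℝ))
  have hlim := ((hu.comp (tendsto_add_atTop_nat (m + 1))).mul hratio).sub
    (tendsto_const_div_atTop_nhds_zero_nat (∑ k ∈ range (m + 1), u k))
  rw [mul_one, sub_zero] at hlim
  refine hlim.congr' ((eventually_ne_atTop 0).mono fun n hn ↦ ?_)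
  have hn' : (n : ℝ) ≠ 0 := Nat.cast_ne_zero.2 hn
  simp only [Function.comp_apply, cesaroAvg, sum_Icc_comp_add, ← add_assoc]
  push_cast
  field_simp
  ring

theorem tendsto_cesaroAvg_sum_comp_add {u : ℕ → ℝ} {I : ℝ}
    (hu : Tendsto (fun N : ℕ ↦ (1 / (N : ℝ)) * ∑ k ∈ range N, u k) atTop (𝓝 I)) (ℓ : ℕ) :
    Tendsto (cesaroAvg fun j ↦ ∑ i : Fin ℓ, u (j + i)) atTop (𝓝 (ℓ * I)) := by
  have := tendsto_finsetSum univ fun (i : Fin ℓ) _ ↦ tendsto_cesaroAvg_comp_add hu i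
  simpa only [← cesaroAvg_sum, sum_const, card_univ, Fintype.card_fin, nsmul_eq_mul] using this

section BlockFrequencies

variable {q : ℕ → ℕ} {ℓ : ℕ} {P : (Fin ℓ → ℕ) → ℝ}
  (hP : ∀ D, Tendsto (cesaroAvg (blockWeight q · D)) atTop (𝓝 (P D)))
include hP

theorem tendsto_cesaroAvg_sum_blockWeight (F : Finset (Fin ℓ → ℕ)) :
    Tendsto (cesaroAvg fun j ↦ ∑ D ∈ F, blockWeight q j D) atTop (𝓝 (∑ D ∈ F, P D)) := by
  simpa only [← cesaroAvg_sum] using tendsto_finsetSum F fun D _ ↦ hP D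

theorem sum_le_one_of_tendsto_cesaroAvg_blockWeight (F : Finset (Fin ℓ → ℕ)) :
    ∑ D ∈ F, P D ≤ 1 :=
  le_of_tendsto (tendsto_cesaroAvg_sum_blockWeight hP F) <|
    (eventually_ne_atTop 0).mono fun n hn ↦ (cesaroAvg_le_cesaroAvg
      (fun j ↦ sum_blockWeight_le_one q j F) n).trans_eq (cesaroAvg_const 1 hn)

theorem tsum_eq_one_of_tendsto_cesaroAvg_blockWeight (hq : ∀ n, 0 < q n) {ε : ℕ → ℝ}
    (hlarge : ∀ M, Tendsto (cesaroAvg fun j ↦ ∑ i : Fin ℓ, if M < q (j + i) then 1 else 0)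
      atTop (𝓝 (ε M)))
    (hε : Tendsto ε atTop (𝓝 0)) :
    ∑' D, P D = 1 := by
  have hPnn (D) : 0 ≤ P D :=
    ge_of_tendsto' (hP D) (cesaroAvg_nonneg fun j ↦ blockWeight_nonneg q j D)
  have hle := sum_le_one_of_tendsto_cesaroAvg_blockWeight hP
  have hsumm : Summable P := summable_of_sum_le hPnn hle
  refine le_antisymm (hsumm.tsum_le_of_sum_le hle)
    (le_of_tendsto' (by simpa using hε.const_sub 1) fun M ↦ ?_)
  set box := Fintype.piFinset fun _ : Fin ℓ ↦ range M
  have hbox : 1 ≤ ∑ D ∈ box, P D + ε M := by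
    refine ge_of_tendsto ((tendsto_cesaroAvg_sum_blockWeight hP box).add (hlarge M)) <|
      (eventually_ne_atTop 0).mono fun n hn ↦ ?_
    rw [← cesaroAvg_add]
    exact (cesaroAvg_const 1 hn).symm.trans_le
      (cesaroAvg_le_cesaroAvg (one_le_sum_blockWeight_add_sum_ite_lt hq ℓ M) n)
  linarith [hsumm.sum_le_tsum box fun D _ ↦ hPnn D]

end BlockFrequencies

theorem tendsto_integral_ite_lt {X : Type*} [MeasurableSpace X] (μ : Measure X)
    [IsFiniteMeasure μ] {f : X → ℕ} (hf : Measurable f) :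
    Tendsto (fun M : ℕ ↦ ∫ x, (if M < f x then 1 else 0 : ℝ) ∂μ) atTop (𝓝 0) := by
  have hmeas (M : ℕ) : Measurable fun x ↦ (if M < f x then 1 else 0 : ℝ) :=
    (measurable_from_nat (f := fun k : ℕ ↦ (if M < k then 1 else 0 : ℝ))).comp hf
  have hlim : ∀ᵐ x ∂μ, Tendsto (fun M : ℕ ↦ (if M < f x then 1 else 0 : ℝ)) atTop (𝓝 0) :=
    .of_forall fun x ↦ tendsto_const_nhds.congr' <|
      (eventually_ge_atTop (f x)).mono fun M hM ↦ (if_neg hM.not_gt).symm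
  simpa using tendsto_integral_of_dominated_convergence (fun _ ↦ 1)
    (fun M ↦ (hmeas M).aestronglyMeasurable) (integrable_const 1)
    (fun M ↦ .of_forall fun x ↦ by split_ifs <;> simp) hlim

theorem stmt_6_general {X : Type*} [MetricSpace X]
    [MeasurableSpace X] [BorelSpace X]
    (μ : Measure X) [IsProbabilityMeasure μ]
    (T : X → X)
    (f : X → ℕ) (hfcont : Continuous f) (hf2 : ∀ x, 2 ≤ f x)
    (x₀ : X)
    (hgen : ∀ g : X → ℝ, Continuous g → Integrable g μ →
      Tendsto (fun N : ℕ => (1 / (N : ℝ)) * ∑ n ∈ Finset.range N, g (T^[n] x₀))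
        atTop (𝓝 (∫ x, g x ∂μ)))
    (q : ℕ → ℕ) (hq : ∀ n, q n = f (T^[n] x₀))
    (ℓ : ℕ)
    (P : (Fin ℓ → ℕ) → ℝ)
    (hP : ∀ D : Fin ℓ → ℕ,
      Tendsto (fun n : ℕ =>
        (∑ j ∈ Finset.Icc 1 n,
          (if ∀ i : Fin ℓ, D i < q (j + (i : ℕ)) then
            (∏ i : Fin ℓ, (q (j + (i : ℕ)) : ℝ))⁻¹ else 0)) / (n : ℝ))
        atTop (𝓝 (P D))) :
    ∑' D : Fin ℓ → ℕ, P D = 1 := by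
  have hqpos (n : ℕ) : 0 < q n := hq n ▸ two_pos.trans_le (hf2 _)
  have hP' (D) : Tendsto (cesaroAvg (blockWeight q · D)) atTop (𝓝 (P D)) :=
    (hP D).congr fun n ↦ by simp only [cesaroAvg, blockWeight_eq_ite]
  refine tsum_eq_one_of_tendsto_cesaroAvg_blockWeight hP' hqpos (fun M ↦ ?_)
    (by simpa using (tendsto_integral_ite_lt μ hfcont.measurable).const_mul (ℓ : ℝ))
  have hcont : Continuous fun x ↦ (if M < f x then 1 else 0 : ℝ) :=
    (continuous_of_discreteTopology (f := fun k : ℕ ↦ (if M < k then 1 else 0 : ℝ))).comp hfcont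
  have hint : Integrable (fun x ↦ (if M < f x then 1 else 0 : ℝ)) μ :=
    .of_bound hcont.aestronglyMeasurable 1 (.of_forall fun x ↦ by split_ifs <;> simp)
  simpa only [hq] using tendsto_cesaroAvg_sum_comp_add (hgen _ hcont hint) ℓ

/-- For a dynamically generated basic sequence `Q` and every block length `ℓ`, the sum
over all digit blocks `D ∈ ℕ₀^ℓ` of `P_D = lim Q_n(D)/n` equals `1`. -/
theorem stmt_6 {X : Type*} [MetricSpace X] [CompleteSpace X]
    [TopologicalSpace.SeparableSpace X] [MeasurableSpace X] [BorelSpace X]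
    (μ : Measure X) [IsProbabilityMeasure μ]
    (hμpos : ∀ U : Set X, IsOpen U → U.Nonempty → 0 < μ U)
    (T : X → X) (hTcont : Continuous T) (hTpres : MeasurePreserving T μ μ)
    (f : X → ℕ) (hfcont : Continuous f) (hf2 : ∀ x, 2 ≤ f x)
    (x₀ : X)
    (hgen : ∀ g : X → ℝ, Continuous g → Integrable g μ →
      Tendsto (fun N : ℕ => (1 / (N : ℝ)) * ∑ n ∈ Finset.range N, g (T^[n] x₀))
        atTop (𝓝 (∫ x, g x ∂μ)))
    (q : ℕ → ℕ) (hq : ∀ n, q n = f (T^[n] x₀))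
    (ℓ : ℕ) (hℓ : 0 < ℓ)
    (P : (Fin ℓ → ℕ) → ℝ)
    (hP : ∀ D : Fin ℓ → ℕ,
      Tendsto (fun n : ℕ =>
        (∑ j ∈ Finset.Icc 1 n,
          (if ∀ i : Fin ℓ, D i < q (j + (i : ℕ)) then
            (∏ i : Fin ℓ, (q (j + (i : ℕ)) : ℝ))⁻¹ else 0)) / (n : ℝ))
        atTop (𝓝 (P D))) :
    ∑' D : Fin ℓ → ℕ, P D = 1 :=
  stmt_6_general μ T f hfcont hf2 x₀ hgen q hq ℓ P hP
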